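/- Let β ∈ (0,1] and α_β = 2/√(4−β). For the Tukey window w_β, and any complex a, b, the integral over the ISI-present interval of |a·w_β(t) + b·w_β(t−1)|² dt, where the interval is {t : |t − 1/2| < β/2}, equals α_β²·β·ψ(a,b), with ψ(a,b) = (1/4)|a+b|² + (1/8)|a−b|². -/

import Mathlib

open MeasureTheory

noncomputable def psi (a b : ℂ) : ℝ :=
  (1/4) * ‖a + b‖ ^ 2 + (1/8) * ‖a - b‖ ^ 2

/-- The Tukey window with parameter `β` and normalization `α_β = 2/√(4−β)`. -/
noncomputable def tukeyW (β t : ℝ) : ℝ :=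
  if |t| ≤ (1 - β) / 2 then 2 / Real.sqrt (4 - β)
  else if |(|t| - 1/2)| ≤ β / 2 then
    (2 / Real.sqrt (4 - β)) / 2 * (1 - Real.sin (Real.pi * (2 * |t| - 1) / (2 * β)))
  else 0

lemma tukeyW_mid (β t : ℝ) (hβ0 : 0 < β) (hβ1 : β ≤ 1)
    (h1 : (1 - β) / 2 < t) (h2 : t < (1 + β) / 2) :
    tukeyW β t
      = 2 / Real.sqrt (4 - β) / 2 * (1 - Real.sin (Real.pi * (2 * t - 1) / (2 * β))) := by
  have ht0 : 0 < t := by nlinarith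
  rw [tukeyW, abs_of_pos ht0, if_neg (by linarith),
    if_pos (by rw [abs_le]; constructor <;> linarith)]

lemma tukeyW_mid' (β t : ℝ) (hβ0 : 0 < β) (hβ1 : β ≤ 1)
    (h1 : (1 - β) / 2 < t) (h2 : t < (1 + β) / 2) :
    tukeyW β (t - 1)
      = 2 / Real.sqrt (4 - β) / 2 * (1 + Real.sin (Real.pi * (2 * t - 1) / (2 * β))) := by
  have hneg : t - 1 < 0 := by nlinarith
  rw [tukeyW, abs_of_neg hneg, if_neg (by push_neg; linarith),
    if_pos (by rw [abs_le]; constructor <;> linarith)]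
  have harg : Real.pi * (2 * -(t - 1) - 1) / (2 * β)
      = -(Real.pi * (2 * t - 1) / (2 * β)) := by ring
  rw [harg, Real.sin_neg]; ring

/-- The integrand on the overlap interval, written with `cos` of the doubled angle. -/
noncomputable def gfun (β : ℝ) (a b : ℂ) (t : ℝ) : ℝ :=
  (2 / Real.sqrt (4 - β) / 2) ^ 2 *
    (Complex.normSq (a + b) + Complex.normSq (b - a) / 2
      + 2 * ((a + b).re * (b - a).re + (a + b).im * (b - a).im)
          * Real.sin (Real.pi * (2 * t - 1) / (2 * β))
      - Complex.normSq (b - a) / 2 * Real.cos (Real.pi * (2 * t - 1) / β))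

/-- An antiderivative of `gfun`. -/
noncomputable def Ffun (β : ℝ) (a b : ℂ) (t : ℝ) : ℝ :=
  (2 / Real.sqrt (4 - β) / 2) ^ 2 *
    ((Complex.normSq (a + b) + Complex.normSq (b - a) / 2) * t
      - 2 * ((a + b).re * (b - a).re + (a + b).im * (b - a).im) * (β / Real.pi)
          * Real.cos (Real.pi * (2 * t - 1) / (2 * β))
      - Complex.normSq (b - a) / 2 * (β / (2 * Real.pi))
          * Real.sin (Real.pi * (2 * t - 1) / β))

lemma hasDerivAt_Ffun (β : ℝ) (hβ0 : 0 < β) (a b : ℂ) (t : ℝ) :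
    HasDerivAt (Ffun β a b) (gfun β a b t) t := by
  have hβ : β ≠ 0 := ne_of_gt hβ0
  have hπ : Real.pi ≠ 0 := Real.pi_ne_zero
  have hinner : HasDerivAt (fun s : ℝ => Real.pi * (2 * s - 1) / (2 * β))
      (Real.pi * 2 / (2 * β)) t := by
    simpa using
      ((((hasDerivAt_id t).const_mul (2 : ℝ)).sub_const 1).const_mul Real.pi).div_const (2 * β)
  have hinner2 : HasDerivAt (fun s : ℝ => Real.pi * (2 * s - 1) / β)
      (Real.pi * 2 / β) t := by
    simpa using
      ((((hasDerivAt_id t).const_mul (2 : ℝ)).sub_const 1).const_mul Real.pi).div_const β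
  have hcos : HasDerivAt (fun s : ℝ => Real.cos (Real.pi * (2 * s - 1) / (2 * β)))
      (-Real.sin (Real.pi * (2 * t - 1) / (2 * β)) * (Real.pi * 2 / (2 * β))) t :=
    (Real.hasDerivAt_cos _).comp t hinner
  have hsin : HasDerivAt (fun s : ℝ => Real.sin (Real.pi * (2 * s - 1) / β))
      (Real.cos (Real.pi * (2 * t - 1) / β) * (Real.pi * 2 / β)) t :=
    (Real.hasDerivAt_sin _).comp t hinner2
  have hlin : HasDerivAt
      (fun s : ℝ => (Complex.normSq (a + b) + Complex.normSq (b - a) / 2) * s)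
      (Complex.normSq (a + b) + Complex.normSq (b - a) / 2) t := by
    simpa using (hasDerivAt_id t).const_mul (Complex.normSq (a + b) + Complex.normSq (b - a) / 2)
  have h := ((hlin.sub
      ((hcos.const_mul
        (2 * ((a + b).re * (b - a).re + (a + b).im * (b - a).im) * (β / Real.pi))))).sub
      (hsin.const_mul (Complex.normSq (b - a) / 2 * (β / (2 * Real.pi))))).const_mul
      ((2 / Real.sqrt (4 - β) / 2) ^ 2)
  refine h.congr_deriv ?_
  unfold gfun
  congr 1
  field_simp
  ring

theorem isi_present_integral (β : ℝ) (hβ : β ∈ Set.Ioc 0 1) (a b : ℂ) :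
    ∫ t in Set.Ioo ((1 - β) / 2) ((1 + β) / 2),
        ‖a * (tukeyW β t : ℂ) + b * (tukeyW β (t - 1) : ℂ)‖ ^ 2
      = (2 / Real.sqrt (4 - β)) ^ 2 * β * psi a b := by
  obtain ⟨hβ0, hβ1⟩ := hβ
  have hβ : β ≠ 0 := ne_of_gt hβ0
  have hπ : Real.pi ≠ 0 := Real.pi_ne_zero
  have hle : (1 - β) / 2 ≤ (1 + β) / 2 := by linarith
  -- Step 1: rewrite the integrand on the open interval
  have hcongr : ∀ t ∈ Set.Ioo ((1 - β) / 2) ((1 + β) / 2),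
      ‖a * (tukeyW β t : ℂ) + b * (tukeyW β (t - 1) : ℂ)‖ ^ 2
        = gfun β a b t := by
    intro t ht
    obtain ⟨h1, h2⟩ := ht
    rw [tukeyW_mid β t hβ0 hβ1 h1 h2, tukeyW_mid' β t hβ0 hβ1 h1 h2]
    have hdbl : Real.pi * (2 * t - 1) / β = 2 * (Real.pi * (2 * t - 1) / (2 * β)) := by
      field_simp
    have hcos2 : Real.cos (2 * (Real.pi * (2 * t - 1) / (2 * β)))
        = 1 - 2 * Real.sin (Real.pi * (2 * t - 1) / (2 * β)) ^ 2 := by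
      have := Real.sin_sq_eq_half_sub (Real.pi * (2 * t - 1) / (2 * β)); linarith
    rw [Complex.sq_norm, gfun, hdbl, hcos2]
    simp only [Complex.normSq_apply, Complex.add_re, Complex.add_im, Complex.sub_re,
      Complex.sub_im, Complex.mul_re, Complex.mul_im, Complex.ofReal_re, Complex.ofReal_im]
    ring
  rw [setIntegral_congr_fun measurableSet_Ioo hcongr]
  -- Step 2: convert to an interval integral and apply FTC
  have hIoo : ∫ t in Set.Ioo ((1 - β) / 2) ((1 + β) / 2), gfun β a b t
      = ∫ t in ((1 - β) / 2)..((1 + β) / 2), gfun β a b t := by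
    rw [intervalIntegral.integral_of_le hle, integral_Ioc_eq_integral_Ioo]
  rw [hIoo]
  have hcont : Continuous (gfun β a b) := by
    unfold gfun; fun_prop
  rw [intervalIntegral.integral_eq_sub_of_hasDerivAt
    (fun t _ => hasDerivAt_Ffun β hβ0 a b t) (hcont.intervalIntegrable _ _)]
  -- Step 3: evaluate the endpoints
  have e1 : Real.pi * (2 * ((1 + β) / 2) - 1) / (2 * β) = Real.pi / 2 := by
    field_simp; ring
  have e2 : Real.pi * (2 * ((1 + β) / 2) - 1) / β = Real.pi := by
    field_simp; ring
  have e3 : Real.pi * (2 * ((1 - β) / 2) - 1) / (2 * β) = -(Real.pi / 2) := by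
    field_simp; ring
  have e4 : Real.pi * (2 * ((1 - β) / 2) - 1) / β = -Real.pi := by
    field_simp; ring
  rw [Ffun, Ffun, e1, e2, e3, e4, Real.cos_neg, Real.sin_neg, Real.cos_pi_div_two,
    Real.sin_pi]
  rw [psi, Complex.sq_norm, Complex.sq_norm]
  have hBA : Complex.normSq (a - b) = Complex.normSq (b - a) := by
    simp [Complex.normSq_apply, Complex.sub_re, Complex.sub_im]; ring
  rw [hBA]
  ring
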